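/- arXiv:0708.1259 — 2 statements merged into one kernel-verified Lean document; each statement's English description precedes it below -/
import Mathlib

section
/- For any integer λ, the q-series identity p(λ; x) = p(x) · S_λ(p̄)(x) holds in ℚ(q)[[x]], where p(λ;x) = ∑_{k≥0}[λ,k]x^k, p(x) = ∑_{k≥0}[∞,k]x^k with [∞,k] = 1/∏_{i=1}^k(1-q^i), p̄(x) is p with q replaced by q^{-1}, and S_λ multiplies the coefficient of x^k by q^{λk}. -/
/-!
All three series solve the q-difference equation `(1 - x) F(x) = (1 - q^{λ+1} x) F(qx)`, i.e. the
recurrence `(1 - q^{k+1}) F_{k+1} = (1 - q^{λ+1} q^k) F_k`. As `q` is not a root of unity, a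
solution is determined by its constant term, which is `1` on both sides. For `p(λ; x)` the
recurrence is that of `[λ, k]`; for the product it follows by multiplying `(1 - x) p(x) = p(qx)`
and `S_λ p̄(x) = (1 - q^{λ+1} x) S_λ p̄(qx)`.
-/

open PowerSeries

/-- `K = ℚ(q)`, the field of rational functions in q over ℚ. -/
noncomputable abbrev K := RatFunc ℚ

/-- The variable q of ℚ(q). -/
noncomputable abbrev q : K := RatFunc.X

/-- The q-binomial type coefficient `[n,k] = (∏_{i=1}^k (1-q^{n+i}))/(∏_{i=1}^k (1-q^i))`. -/
noncomputable def qBinom (n : ℤ) (k : ℕ) : K :=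
  (∏ i ∈ Finset.Icc 1 k, (1 - q ^ (n + (i : ℤ)))) / (∏ i ∈ Finset.Icc 1 k, (1 - q ^ (i : ℤ)))

namespace PowerSeries

variable {R : Type*} [CommRing R]

theorem one_sub_C_mul_X_mul_eq_iff (a b c : R) (f : R⟦X⟧) :
    (1 - C b * X) * f = (1 - C a * X) * rescale c f ↔
      ∀ k, (1 - c ^ (k + 1)) * coeff (k + 1) f = (b - a * c ^ k) * coeff k f := by
  simp only [PowerSeries.ext_iff, sub_mul, one_mul, map_sub, mul_assoc, coeff_rescale]
  refine ⟨fun h k => ?_, fun h n => ?_⟩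
  · have hk := h (k + 1)
    simp only [coeff_C_mul, coeff_succ_X_mul, coeff_rescale] at hk
    linear_combination hk
  · rcases n with _ | k
    · simp
    · simp only [coeff_C_mul, coeff_succ_X_mul, coeff_rescale]
      linear_combination h k

theorem eq_of_coeff_recurrence [IsDomain R] {u v : ℕ → R} (hu : ∀ k, u k ≠ 0) {f g : R⟦X⟧}
    (hf : ∀ k, u k * coeff (k + 1) f = v k * coeff k f)
    (hg : ∀ k, u k * coeff (k + 1) g = v k * coeff k g) (h₀ : coeff 0 f = coeff 0 g) :
    f = g := by
  ext n
  induction n with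
  | zero => exact h₀
  | succ k ih => exact mul_left_cancel₀ (hu k) (by rw [hf, hg, ih])

/-- Multiply the functional equations `(1 - x) P(x) = P(cx)` and `G(x) = (1 - a x) G(cx)`. -/
theorem coeff_mul_recurrence {a c : R} {P G : R⟦X⟧}
    (hP : ∀ k, (1 - c ^ (k + 1)) * coeff (k + 1) P = coeff k P)
    (hG : ∀ k, (1 - c ^ (k + 1)) * coeff (k + 1) G = -(a * c ^ k) * coeff k G) (k : ℕ) :
    (1 - c ^ (k + 1)) * coeff (k + 1) (P * G) = (1 - a * c ^ k) * coeff k (P * G) := by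
  have hP' := (one_sub_C_mul_X_mul_eq_iff 0 1 c P).2 (by simpa using hP)
  have hG' := (one_sub_C_mul_X_mul_eq_iff a 0 c G).2 (by simpa using hG)
  simp only [map_one, map_zero, one_mul, zero_mul, sub_zero] at hP' hG'
  refine (one_sub_C_mul_X_mul_eq_iff a 1 c (P * G)).1 ?_ k
  calc (1 - C 1 * X) * (P * G) = rescale c P * ((1 - C a * X) * rescale c G) := by
        rw [map_one, one_mul, ← mul_assoc, hP', ← hG']
    _ = (1 - C a * X) * rescale c (P * G) := by rw [map_mul]; ring

end PowerSeries

theorem q_pow_succ_ne_one (k : ℕ) : q ^ (k + 1) ≠ 1 := by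
  intro h
  have hdeg := congrArg RatFunc.intDegree h
  rw [q, ← RatFunc.algebraMap_X, ← map_pow, RatFunc.intDegree_polynomial] at hdeg
  simp at hdeg
  omega

theorem one_sub_q_pow_succ_ne_zero (k : ℕ) : 1 - q ^ (k + 1) ≠ 0 :=
  sub_ne_zero.2 (q_pow_succ_ne_one k).symm

/-- `pCoeff k = [∞, k]`, and `pBarCoeff k` is its conjugate. -/
noncomputable def pCoeff (k : ℕ) : K := (∏ i ∈ Finset.Icc 1 k, (1 - q ^ (i : ℤ)))⁻¹

noncomputable def pBarCoeff (k : ℕ) : K := (∏ i ∈ Finset.Icc 1 k, (1 - q ^ (-(i : ℤ))))⁻¹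

theorem pCoeff_succ (k : ℕ) : (1 - q ^ (k + 1)) * pCoeff (k + 1) = pCoeff k := by
  rw [pCoeff, pCoeff, Finset.prod_Icc_succ_top (by omega), zpow_natCast, mul_inv,
    mul_left_comm, mul_inv_cancel₀ (one_sub_q_pow_succ_ne_zero k), mul_one]

theorem pBarCoeff_succ (k : ℕ) :
    (1 - q ^ (k + 1)) * pBarCoeff (k + 1) = -q ^ (k + 1) * pBarCoeff k := by
  rw [pBarCoeff, pBarCoeff, Finset.prod_Icc_succ_top (by omega), zpow_neg, zpow_natCast]
  have hx : q ^ (k + 1) ≠ 0 := pow_ne_zero _ RatFunc.X_ne_zero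
  have hx1 : q ^ (k + 1) - 1 ≠ 0 := sub_ne_zero.2 (q_pow_succ_ne_one k)
  generalize q ^ (k + 1) = x at hx hx1 ⊢
  field_simp
  ring

theorem qBinom_succ (l : ℤ) (k : ℕ) :
    (1 - q ^ (k + 1)) * qBinom l (k + 1) = (1 - q ^ (l + 1) * q ^ k) * qBinom l k := by
  have hexp : q ^ (l + ((k + 1 : ℕ) : ℤ)) = q ^ (l + 1) * q ^ k := by
    rw [← zpow_natCast, ← zpow_add₀ RatFunc.X_ne_zero]
    push_cast
    ring_nf
  rw [qBinom, qBinom, Finset.prod_Icc_succ_top (by omega), Finset.prod_Icc_succ_top (by omega),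
    hexp, zpow_natCast]
  field_simp [one_sub_q_pow_succ_ne_zero k]

theorem zpow_mul_pBarCoeff_succ (l : ℤ) (k : ℕ) :
    (1 - q ^ (k + 1)) * (q ^ (l * ((k + 1 : ℕ) : ℤ)) * pBarCoeff (k + 1)) =
      -(q ^ (l + 1) * q ^ k) * (q ^ (l * (k : ℤ)) * pBarCoeff k) := by
  have hexp : q ^ (l * ((k + 1 : ℕ) : ℤ)) = q ^ (l * (k : ℤ)) * q ^ l := by
    rw [← zpow_add₀ RatFunc.X_ne_zero]
    push_cast
    ring_nf
  rw [mul_left_comm, pBarCoeff_succ, hexp, zpow_add_one₀ RatFunc.X_ne_zero]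
  ring

/-- For any integer λ, `p(λ;x) = p(x) · S_λ(p̄)(x)` in ℚ(q)[[x]], where
`p(λ;x) = ∑_k [λ,k] x^k`, `p(x) = ∑_k x^k/∏_{i=1}^k(1-q^i)`, `p̄` is `p` with q replaced by
`q⁻¹`, and `S_λ` multiplies the coefficient of x^k by `q^{λk}`. -/
theorem p_lambda_eq_p_mul_S_p_bar (l : ℤ) :
    (PowerSeries.mk fun k => qBinom l k : PowerSeries K)
    = (PowerSeries.mk fun k => (∏ i ∈ Finset.Icc 1 k, (1 - q ^ (i : ℤ)))⁻¹) *
      (PowerSeries.mk fun k =>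
        q ^ (l * (k : ℤ)) * (∏ i ∈ Finset.Icc 1 k, (1 - q ^ (-(i : ℤ))))⁻¹) := by
  have hp : ∀ k, (1 - q ^ (k + 1)) * coeff (k + 1) (mk pCoeff) = coeff k (mk pCoeff) := by
    simpa using pCoeff_succ
  have hSpBar : ∀ k,
      (1 - q ^ (k + 1)) * coeff (k + 1) (mk fun k => q ^ (l * (k : ℤ)) * pBarCoeff k) =
        -(q ^ (l + 1) * q ^ k) * coeff k (mk fun k => q ^ (l * (k : ℤ)) * pBarCoeff k) := by
    simpa using zpow_mul_pBarCoeff_succ l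
  refine eq_of_coeff_recurrence (u := fun k => 1 - q ^ (k + 1)) one_sub_q_pow_succ_ne_zero
    (fun k => by simpa using qBinom_succ l k) (coeff_mul_recurrence hp hSpBar) ?_
  simp [qBinom]
end

section
/- Let f ∈ 1 + m and g ∈ R = ℚ(q)[[x]], and define elements g_d ∈ R for d ≥ 1 by the requirement ∑_{d|n} d·g_d = ψ_n(g) for all n ≥ 1 (solved by Möbius inversion). Then Pow(f,g) := Exp(g · Log(f)) = ∏_{d≥1} ψ_d(f)^{g_d}, where the power with exponent in R is h^e := exp(e · log h). -/
open PowerSeries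

/-- The Adams operation `q ↦ q^k` on ℚ(q), computed on numerator and denominator. -/
noncomputable def psiQ (k : ℕ) (r : K) : K :=
  algebraMap (Polynomial ℚ) K (r.num.comp (Polynomial.X ^ k)) /
    algebraMap (Polynomial ℚ) K (r.denom.comp (Polynomial.X ^ k))

/-- The Adams operation on ℚ(q)[[x]]: `ψ_k(f)(q,x) = f(q^k, x^k)` (for k ≥ 1). -/
noncomputable def adamsPS (k : ℕ) (f : PowerSeries K) : PowerSeries K :=
  PowerSeries.mk fun n =>
    if k ∣ n then psiQ k (PowerSeries.coeff (n / k) f) else 0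

/-- Formal exponential of a power series with zero constant term, written coefficientwise. -/
noncomputable def pexp (f : PowerSeries K) : PowerSeries K :=
  PowerSeries.mk fun n =>
    ∑ k ∈ Finset.range (n + 1), ((k.factorial : K))⁻¹ * PowerSeries.coeff n (f ^ k)

/-- Formal logarithm of a power series with constant term one, written coefficientwise. -/
noncomputable def plog (f : PowerSeries K) : PowerSeries K :=
  PowerSeries.mk fun n =>
    ∑ k ∈ Finset.Icc 1 n, (-1 : K) ^ (k + 1) * (k : K)⁻¹ * PowerSeries.coeff n ((f - 1) ^ k)

/-- The plethystic exponential `Exp(f) = exp(∑_{k≥1} ψ_k(f)/k)` for f ∈ m. -/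
noncomputable def pExp (f : PowerSeries K) : PowerSeries K :=
  pexp (PowerSeries.mk fun n =>
    ∑ k ∈ n.divisors, (k : K)⁻¹ * psiQ k (PowerSeries.coeff (n / k) f))

/-- The plethystic logarithm `Log(f) = ∑_{k≥1} (μ(k)/k) ψ_k(log f)` for f ∈ 1 + m. -/
noncomputable def pLog (f : PowerSeries K) : PowerSeries K :=
  PowerSeries.mk fun n =>
    ∑ k ∈ n.divisors,
      (algebraMap ℚ K ((ArithmeticFunction.moebius k : ℚ) / k)) *
        psiQ k (PowerSeries.coeff (n / k) (plog f))

/-- The power `h^e = exp(e · log h)` for `h ∈ 1 + m` and an arbitrary exponent `e ∈ R`. -/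
noncomputable def pPow (h e : PowerSeries K) : PowerSeries K := pexp (e * plog h)

/-- The infinite product `∏_{d≥1} F d`, for factors with `F d ∈ 1 + x^d·R`, written
coefficientwise: the coefficient of x^n only involves the factors with d ≤ n. -/
noncomputable def infProd (F : ℕ → PowerSeries K) : PowerSeries K :=
  PowerSeries.mk fun n => PowerSeries.coeff n (∏ d ∈ Finset.Icc 1 n, F d)

/-! Write `L = log f` and `P(h) = ∑_{k ≥ 1} ψ_k(h)/k`, so that `Exp = exp ∘ P` and
`Log f = ∑_j (μ(j)/j) ψ_j(L)`. Then
`P(g · Log f) = ∑_{j,k} μ(j)/(jk) · ψ_k(g) ψ_{jk}(L) = ∑_n (1/n) (∑_{jk = n} μ(j) ψ_k(g)) ψ_n(L)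
= ∑_n g_n ψ_n(L)`, the last step being Möbius inversion of `∑_{d ∣ n} d g_d = ψ_n(g)`.
As `ψ_n` is a ring endomorphism, `ψ_n(L) = log ψ_n(f)`, and `exp` turns the sum into the product
`∏_n exp(g_n log ψ_n(f))`. All infinite sums are compared modulo `x^(N+1)`, where only the terms
with `n ≤ N` survive since `ψ_n` maps `m` into `x^n R`. -/

open Finset

open ArithmeticFunction (moebius)

noncomputable def psiHom (k : ℕ) (hk : k ≠ 0) : K →+* K :=
  IsFractionRing.lift (g := (algebraMap (Polynomial ℚ) K).comp (Polynomial.expand ℚ k).toRingHom)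
    ((IsFractionRing.injective (Polynomial ℚ) K).comp
      (Polynomial.expand_injective (Nat.pos_of_ne_zero hk)))

lemma psiHom_algebraMap {k : ℕ} (hk : k ≠ 0) (p : Polynomial ℚ) :
    psiHom k hk (algebraMap _ K p) = algebraMap _ K (Polynomial.expand ℚ k p) := by
  simp [psiHom]

lemma psiQ_eq_psiHom {k : ℕ} (hk : k ≠ 0) (r : K) : psiQ k r = psiHom k hk r := by
  conv_rhs => rw [← RatFunc.num_div_denom r]
  rw [map_div₀, psiHom_algebraMap, psiHom_algebraMap, psiQ,
    Polynomial.expand_eq_comp_X_pow, Polynomial.expand_eq_comp_X_pow]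

lemma psiHom_comp_psiHom {k j : ℕ} (hk : k ≠ 0) (hj : j ≠ 0) :
    (psiHom k hk).comp (psiHom j hj) = psiHom (k * j) (mul_ne_zero hk hj) := by
  refine IsLocalization.ringHom_ext (nonZeroDivisors (Polynomial ℚ)) (RingHom.ext fun p => ?_)
  simp only [RingHom.comp_apply, psiHom_algebraMap, Polynomial.expand_expand]

noncomputable def adamsHom (k : ℕ) (hk : k ≠ 0) : PowerSeries K →+* PowerSeries K :=
  (expand k hk : PowerSeries K →ₐ[K] PowerSeries K).toRingHom.comp (map (psiHom k hk))

lemma adamsPS_eq_adamsHom {k : ℕ} (hk : k ≠ 0) (f : PowerSeries K) :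
    adamsPS k f = adamsHom k hk f := by
  ext n
  simp [adamsPS, adamsHom, coeff_expand, psiQ_eq_psiHom hk]

lemma adamsHom_adamsHom {k j : ℕ} (hk : k ≠ 0) (hj : j ≠ 0) (f : PowerSeries K) :
    adamsHom k hk (adamsHom j hj f) = adamsHom (k * j) (mul_ne_zero hk hj) f := by
  simp [adamsHom, map_expand, expand_mul k hk j hj, ← psiHom_comp_psiHom hk hj, map_comp]

lemma adamsHom_X {k : ℕ} (hk : k ≠ 0) : adamsHom k hk X = X ^ k := by
  simp [adamsHom]

lemma adamsPS_adamsPS {k j : ℕ} (hk : k ≠ 0) (hj : j ≠ 0) (f : PowerSeries K) :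
    adamsPS k (adamsPS j f) = adamsPS (j * k) f := by
  rw [adamsPS_eq_adamsHom hk, adamsPS_eq_adamsHom hj, adamsHom_adamsHom, ← adamsPS_eq_adamsHom,
    mul_comm]

lemma constantCoeff_adamsPS {k : ℕ} (hk : k ≠ 0) (f : PowerSeries K) :
    constantCoeff (adamsPS k f) = psiHom k hk (constantCoeff f) := by
  rw [← coeff_zero_eq_constantCoeff_apply, ← coeff_zero_eq_constantCoeff_apply, adamsPS, coeff_mk]
  simp [psiQ_eq_psiHom hk]

lemma X_pow_dvd_adamsPS {L : PowerSeries K} (hL : constantCoeff L = 0) (k : ℕ) :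
    X ^ k ∣ adamsPS k L := by
  rcases eq_or_ne k 0 with rfl | hk
  · simp
  rw [adamsPS_eq_adamsHom hk, ← adamsHom_X hk]
  exact map_dvd _ (X_dvd_iff.mpr hL)

lemma smodEq_X_pow_iff {R : Type*} [CommRing R] {n : ℕ} {A B : PowerSeries R} :
    A ≡ B [SMOD Ideal.span {(X : PowerSeries R) ^ n}] ↔ ∀ m < n, coeff m A = coeff m B := by
  simp [SModEq.sub_mem, Ideal.mem_span_singleton, X_pow_dvd_iff, sub_eq_zero]

lemma smodEq_zero_of_X_pow_dvd {R : Type*} [CommRing R] {n m : ℕ} {A : PowerSeries R}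
    (hnm : n ≤ m) (h : X ^ m ∣ A) : A ≡ 0 [SMOD Ideal.span {(X : PowerSeries R) ^ n}] :=
  SModEq.zero.mpr (Ideal.mem_span_singleton.mpr ((pow_dvd_pow X hnm).trans h))

lemma SModEq.algebra_smul {S R : Type*} [CommSemiring S] [CommRing R] [Algebra S R] {I : Ideal R}
    {x y : R} (h : x ≡ y [SMOD I]) (c : S) : c • x ≡ c • y [SMOD I] := by
  simpa only [Algebra.smul_def, Algebra.algebraMap_self, RingHom.id_apply] using
    h.smul (algebraMap S R c)

lemma adamsPS_smodEq {k n : ℕ} (hk : k ≠ 0) {A B : PowerSeries K}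
    (h : A ≡ B [SMOD Ideal.span {(X : PowerSeries K) ^ n}]) :
    adamsPS k A ≡ adamsPS k B [SMOD Ideal.span {(X : PowerSeries K) ^ n}] := by
  rw [SModEq.sub_mem, Ideal.mem_span_singleton] at h ⊢
  rw [adamsPS_eq_adamsHom hk, adamsPS_eq_adamsHom hk, ← map_sub]
  have := map_dvd (adamsHom k hk) h
  rw [map_pow, adamsHom_X] at this
  exact (pow_dvd_pow_of_dvd (dvd_pow_self X hk) n).trans this

lemma sum_smodEq_sum_fiberwise {ι κ R M : Type*} [Ring R] [AddCommGroup M] [Module R M]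
    [DecidableEq κ] {U : Submodule R M} {s : Finset ι} {t : Finset κ} {p : ι → κ} {F : ι → M}
    (hF : ∀ i ∈ s, p i ∉ t → F i ≡ 0 [SMOD U]) :
    ∑ i ∈ s, F i ≡ ∑ j ∈ t, ∑ i ∈ s with p i = j, F i [SMOD U] := by
  rw [sum_fiberwise_eq_sum_filter, ← sum_filter_add_sum_filter_not s (p · ∈ t)]
  simpa using (SModEq.refl _).add (SModEq.sum fun i hi => hF i (mem_filter.mp hi).1
    (mem_filter.mp hi).2)

lemma sum_range_range_smodEq_sum_antidiagonal {R M : Type*} [Ring R] [AddCommGroup M] [Module R M]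
    {U : Submodule R M} {N : ℕ} {F : ℕ → ℕ → M} (hF : ∀ i j, N < i + j → F i j ≡ 0 [SMOD U]) :
    ∑ i ∈ range (N + 1), ∑ j ∈ range (N + 1), F i j ≡
      ∑ n ∈ range (N + 1), ∑ x ∈ antidiagonal n, F x.1 x.2 [SMOD U] := by
  rw [← sum_product']
  refine (sum_smodEq_sum_fiberwise (t := range (N + 1)) (p := fun x => x.1 + x.2)
    fun x _ hx => hF _ _ (by simpa using hx)).trans ?_
  have hfiber : ∀ n ∈ range (N + 1),
      {x ∈ range (N + 1) ×ˢ range (N + 1) | x.1 + x.2 = n} = antidiagonal n := by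
    intro n hn
    ext x
    simp at hn ⊢
    omega
  rw [sum_congr rfl fun n hn => by rw [hfiber n hn]]

lemma sum_Icc_Icc_smodEq_sum_divisorsAntidiagonal {R M : Type*} [Ring R] [AddCommGroup M]
    [Module R M] {U : Submodule R M} {N : ℕ} {F : ℕ → ℕ → M}
    (hF : ∀ i j, N < i * j → F i j ≡ 0 [SMOD U]) :
    ∑ i ∈ Icc 1 N, ∑ j ∈ Icc 1 N, F i j ≡
      ∑ n ∈ Icc 1 N, ∑ x ∈ n.divisorsAntidiagonal, F x.1 x.2 [SMOD U] := by
  rw [← sum_product']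
  refine (sum_smodEq_sum_fiberwise (t := Icc 1 N) (p := fun x => x.1 * x.2)
    fun x hx hxN => hF _ _ ?_).trans ?_
  · simp only [mem_product, mem_Icc, not_and, not_le] at hx hxN
    exact hxN (Nat.mul_pos hx.1.1 hx.2.1)
  have hfiber : ∀ n ∈ Icc 1 N,
      {x ∈ Icc 1 N ×ˢ Icc 1 N | x.1 * x.2 = n} = n.divisorsAntidiagonal := by
    intro n hn
    rw [mem_Icc] at hn
    exact (Nat.divisorsAntidiagonal_eq_prod_filter_of_le (by omega) hn.2).symm
  rw [sum_congr rfl fun n hn => by rw [hfiber n hn]]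

lemma coeff_pow_of_lt {R : Type*} [CommRing R] {a : PowerSeries R} (ha : constantCoeff a = 0)
    {m k : ℕ} (h : m < k) : coeff m (a ^ k) = 0 :=
  X_pow_dvd_iff.mp (pow_dvd_pow_of_dvd (X_dvd_iff.mpr ha) k) m h

noncomputable def expTrunc (N : ℕ) (a : PowerSeries K) : PowerSeries K :=
  ∑ k ∈ range (N + 1), (k.factorial : ℚ)⁻¹ • a ^ k

noncomputable def logTrunc (N : ℕ) (a : PowerSeries K) : PowerSeries K :=
  ∑ k ∈ Icc 1 N, ((-1) ^ (k + 1) / k : ℚ) • a ^ k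

lemma pexp_smodEq_expTrunc {a : PowerSeries K} (ha : constantCoeff a = 0) (N : ℕ) :
    pexp a ≡ expTrunc N a [SMOD Ideal.span {(X : PowerSeries K) ^ (N + 1)}] := by
  refine smodEq_X_pow_iff.mpr fun m hm => ?_
  rw [pexp, coeff_mk, expTrunc, map_sum, ← sum_subset (range_subset_range.mpr hm)]
  · exact sum_congr rfl fun k _ => by simp [Rat.smul_def]
  · intro k _ hk
    rw [coeff_smul, coeff_pow_of_lt ha (by simpa using hk), smul_zero]

lemma plog_smodEq_logTrunc {f : PowerSeries K} (hf : constantCoeff f = 1) (N : ℕ) :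
    plog f ≡ logTrunc N (f - 1) [SMOD Ideal.span {(X : PowerSeries K) ^ (N + 1)}] := by
  have hf1 : constantCoeff (f - 1) = 0 := by simp [hf]
  refine smodEq_X_pow_iff.mpr fun m hm => ?_
  rw [plog, coeff_mk, logTrunc, map_sum, ← sum_subset (Icc_subset_Icc_right (Nat.le_of_lt_succ hm))]
  · exact sum_congr rfl fun k _ => by simp [Rat.smul_def, div_eq_mul_inv]
  · intro k hk hk'
    simp only [mem_Icc] at hk hk'
    rw [coeff_smul, coeff_pow_of_lt hf1 (by omega), smul_zero]

lemma pexp_smodEq {n : ℕ} {A B : PowerSeries K}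
    (h : A ≡ B [SMOD Ideal.span {(X : PowerSeries K) ^ n}]) :
    pexp A ≡ pexp B [SMOD Ideal.span {(X : PowerSeries K) ^ n}] :=
  smodEq_X_pow_iff.mpr fun m hm => by
    simp only [pexp, coeff_mk, smodEq_X_pow_iff.mp (h.pow _) m hm]

lemma inv_factorial_smul_add_pow {A : Type*} [CommRing A] [Algebra ℚ A] (a b : A) (k : ℕ) :
    (k.factorial : ℚ)⁻¹ • (a + b) ^ k = ∑ x ∈ antidiagonal k,
      ((x.1.factorial : ℚ)⁻¹ • a ^ x.1) * ((x.2.factorial : ℚ)⁻¹ • b ^ x.2) := by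
  have := congrArg (coeff k) (exp_mul_exp_eq_exp_add a b)
  simp only [coeff_mul, coeff_rescale, coeff_exp, one_div] at this
  simp only [Algebra.smul_def]
  rw [mul_comm, ← this]
  exact sum_congr rfl fun x _ => by ring

lemma pexp_add {a b : PowerSeries K} (ha : constantCoeff a = 0) (hb : constantCoeff b = 0) :
    pexp (a + b) = pexp a * pexp b := by
  ext n
  refine smodEq_X_pow_iff.mp ?_ n n.lt_succ_self
  refine (pexp_smodEq_expTrunc (by simp [ha, hb]) n).trans
    (((pexp_smodEq_expTrunc ha n).mul (pexp_smodEq_expTrunc hb n)).trans ?_).symm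
  rw [expTrunc, expTrunc, sum_mul_sum, expTrunc]
  simp_rw [inv_factorial_smul_add_pow]
  refine sum_range_range_smodEq_sum_antidiagonal fun i j hij => smodEq_zero_of_X_pow_dvd hij ?_
  rw [smul_mul_smul, pow_add, Algebra.smul_def]
  exact (mul_dvd_mul (pow_dvd_pow_of_dvd (X_dvd_iff.mpr ha) i)
    (pow_dvd_pow_of_dvd (X_dvd_iff.mpr hb) j)).mul_left _

lemma pexp_zero : pexp 0 = 1 := by
  ext n
  simp [pexp, sum_range_succ', coeff_one]

lemma prod_pexp {s : Finset ℕ} {e : ℕ → PowerSeries K} (he : ∀ d ∈ s, constantCoeff (e d) = 0) :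
    ∏ d ∈ s, pexp (e d) = pexp (∑ d ∈ s, e d) := by
  induction s using Finset.cons_induction with
  | empty => simp [pexp_zero]
  | cons a s ha ih =>
    rw [prod_cons, sum_cons, ih fun d hd => he d (mem_cons_of_mem hd),
      pexp_add (he a (mem_cons_self a s))
        (by rw [map_sum]; exact sum_eq_zero fun d hd => he d (mem_cons_of_mem hd))]

lemma constantCoeff_plog (f : PowerSeries K) : constantCoeff (plog f) = 0 := by
  rw [← coeff_zero_eq_constantCoeff_apply, plog, coeff_mk]
  simp

lemma plog_adamsPS {k : ℕ} (hk : k ≠ 0) {f : PowerSeries K} (hf : constantCoeff f = 1) :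
    plog (adamsPS k f) = adamsPS k (plog f) := by
  ext n
  refine smodEq_X_pow_iff.mp ?_ n n.lt_succ_self
  have hcomm : adamsPS k (logTrunc n (f - 1)) = logTrunc n (adamsPS k f - 1) := by
    simp [adamsPS_eq_adamsHom hk, logTrunc, map_rat_smul]
  refine (plog_smodEq_logTrunc (by simp [constantCoeff_adamsPS hk, hf]) n).trans ?_
  rw [← hcomm]
  exact (adamsPS_smodEq hk (plog_smodEq_logTrunc hf n)).symm

/-- `∑_{k ≥ 1} c k • ψ_k(h)` for `h ∈ m`, written coefficientwise as in `pExp` and `pLog`. -/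
noncomputable def adamsSeries (c : ℕ → ℚ) (h : PowerSeries K) : PowerSeries K :=
  mk fun n => ∑ k ∈ n.divisors, algebraMap ℚ K (c k) * psiQ k (coeff (n / k) h)

lemma pExp_eq_pexp_adamsSeries (h : PowerSeries K) :
    pExp h = pexp (adamsSeries (fun k => (k : ℚ)⁻¹) h) := by
  simp [pExp, adamsSeries]

lemma pLog_eq_adamsSeries (f : PowerSeries K) :
    pLog f = adamsSeries (fun k => (moebius k : ℚ) / k) (plog f) :=
  rfl

lemma constantCoeff_adamsSeries (c : ℕ → ℚ) (h : PowerSeries K) :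
    constantCoeff (adamsSeries c h) = 0 := by
  rw [← coeff_zero_eq_constantCoeff_apply, adamsSeries, coeff_mk]
  simp

lemma adamsSeries_smodEq (c : ℕ → ℚ) {h : PowerSeries K} (hh : constantCoeff h = 0) (N : ℕ) :
    adamsSeries c h ≡ ∑ k ∈ Icc 1 N, c k • adamsPS k h
      [SMOD Ideal.span {(X : PowerSeries K) ^ (N + 1)}] := by
  refine smodEq_X_pow_iff.mpr fun m hm => ?_
  rw [adamsSeries, coeff_mk, map_sum]
  rcases eq_or_ne m 0 with rfl | hm0
  · refine (sum_eq_zero fun k hk => ?_).symm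
    have hk0 : k ≠ 0 := by simp at hk; omega
    rw [coeff_smul, coeff_zero_eq_constantCoeff_apply, constantCoeff_adamsPS hk0, hh, map_zero,
      smul_zero]
  rw [← sum_subset (fun k hk => mem_Icc.mpr ⟨Nat.pos_of_mem_divisors hk,
      (Nat.divisor_le hk).trans (Nat.le_of_lt_succ hm)⟩)]
  · refine sum_congr rfl fun k hk => ?_
    simp [adamsPS, Nat.dvd_of_mem_divisors hk, Rat.smul_def]
  · intro k _ hk
    simp [adamsPS, hm0, Rat.smul_def] at hk ⊢
    exact fun h => absurd h hk

lemma inv_smul_adamsPS_mul_sum {k : ℕ} (hk : k ≠ 0) (g L : PowerSeries K) {s : Finset ℕ}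
    (hs : 0 ∉ s) :
    (k : ℚ)⁻¹ • adamsPS k (g * ∑ j ∈ s, ((moebius j : ℚ) / j) • adamsPS j L) =
      ∑ j ∈ s, ((j * k : ℕ) : ℚ)⁻¹ • (moebius j • (adamsPS k g * adamsPS (j * k) L)) := by
  simp only [adamsPS_eq_adamsHom hk, map_mul, map_sum, map_rat_smul, mul_sum, smul_sum]
  refine sum_congr rfl fun j hj => ?_
  rw [← adamsPS_eq_adamsHom hk, ← adamsPS_eq_adamsHom hk,
    adamsPS_adamsPS hk (ne_of_mem_of_not_mem hj hs), mul_smul_comm, smul_smul,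
    ← Int.cast_smul_eq_zsmul ℚ, smul_smul]
  congr 1
  push_cast
  field_simp

lemma sum_divisorsAntidiagonal_smul_adamsPS {g : PowerSeries K} {gd : ℕ → PowerSeries K}
    (hgd : ∀ n : ℕ, 1 ≤ n → ∑ d ∈ n.divisors, (d : PowerSeries K) * gd d = adamsPS n g)
    (L : PowerSeries K) {n : ℕ} (hn : n ≠ 0) :
    ∑ x ∈ n.divisorsAntidiagonal,
        ((x.1 * x.2 : ℕ) : ℚ)⁻¹ • (moebius x.1 • (adamsPS x.2 g * adamsPS (x.1 * x.2) L)) =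
      gd n * adamsPS n L := by
  have hmoebius : ∑ x ∈ n.divisorsAntidiagonal, moebius x.1 • adamsPS x.2 g = n * gd n :=
    ArithmeticFunction.sum_eq_iff_sum_smul_moebius_eq.mp hgd n (Nat.pos_of_ne_zero hn)
  calc _ = (n : ℚ)⁻¹ • ((∑ x ∈ n.divisorsAntidiagonal, moebius x.1 • adamsPS x.2 g) *
          adamsPS n L) := by
        rw [sum_mul, smul_sum]
        refine sum_congr rfl fun x hx => ?_
        rw [(Nat.mem_divisorsAntidiagonal.mp hx).1, smul_mul_assoc]
    _ = gd n * adamsPS n L := by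
        rw [hmoebius, mul_assoc, ← nsmul_eq_mul, ← Nat.cast_smul_eq_nsmul ℚ, smul_smul,
          inv_mul_cancel₀ (by exact_mod_cast hn), one_smul]

lemma adamsSeries_mul_pLog_smodEq (f : PowerSeries K) {g : PowerSeries K} {gd : ℕ → PowerSeries K}
    (hgd : ∀ n : ℕ, 1 ≤ n → ∑ d ∈ n.divisors, (d : PowerSeries K) * gd d = adamsPS n g)
    (N : ℕ) :
    adamsSeries (fun k => (k : ℚ)⁻¹) (g * pLog f) ≡ ∑ n ∈ Icc 1 N, gd n * adamsPS n (plog f)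
      [SMOD Ideal.span {(X : PowerSeries K) ^ (N + 1)}] := by
  have hL := constantCoeff_plog f
  have hLog := adamsSeries_smodEq (fun k => (moebius k : ℚ) / k) hL N
  rw [← pLog_eq_adamsSeries] at hLog
  have hgLog : constantCoeff (g * pLog f) = 0 := by
    rw [map_mul, pLog_eq_adamsSeries, constantCoeff_adamsSeries, mul_zero]
  have hIcc : 0 ∉ Icc 1 N := by simp
  refine (adamsSeries_smodEq _ hgLog N).trans ?_
  refine (SModEq.sum fun k (hk : k ∈ Icc 1 N) => (adamsPS_smodEq (ne_of_mem_of_not_mem hk hIcc)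
    ((SModEq.refl g).mul hLog)).algebra_smul _).trans ?_
  rw [sum_congr rfl fun k hk => inv_smul_adamsPS_mul_sum (ne_of_mem_of_not_mem hk hIcc) g _ hIcc,
    sum_comm, ← sum_congr rfl fun n hn =>
      sum_divisorsAntidiagonal_smul_adamsPS hgd _ (ne_of_mem_of_not_mem hn hIcc)]
  refine sum_Icc_Icc_smodEq_sum_divisorsAntidiagonal fun j k hjk =>
    smodEq_zero_of_X_pow_dvd hjk ?_
  rw [Algebra.smul_def, zsmul_eq_mul]
  exact dvd_mul_of_dvd_right (dvd_mul_of_dvd_right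
    (dvd_mul_of_dvd_right (X_pow_dvd_adamsPS hL _) _) _) _

/-- Let `f ∈ 1 + m`, `g ∈ R = ℚ(q)[[x]]`, and let `g_d ∈ R` (d ≥ 1) satisfy
`∑_{d|n} d·g_d = ψ_n(g)` for all n ≥ 1. Then
`Pow(f,g) := Exp(g·Log(f)) = ∏_{d≥1} ψ_d(f)^{g_d}`. -/
theorem pPow_eq_prod_adams (f g : PowerSeries K) (hf : PowerSeries.constantCoeff f = 1)
    (gd : ℕ → PowerSeries K)
    (hgd : ∀ n : ℕ, 1 ≤ n → ∑ d ∈ n.divisors, (d : PowerSeries K) * gd d = adamsPS n g) :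
    pExp (g * pLog f) = infProd (fun d => pPow (adamsPS d f) (gd d)) := by
  ext N
  rw [infProd, coeff_mk]
  unfold pPow
  rw [prod_pexp fun d _ => by rw [map_mul, constantCoeff_plog, mul_zero],
    sum_congr rfl fun d hd => by rw [plog_adamsPS (by simp at hd; omega) hf],
    pExp_eq_pexp_adamsSeries]
  exact smodEq_X_pow_iff.mp (pexp_smodEq (adamsSeries_mul_pLog_smodEq f hgd N)) N N.lt_succ_self
end
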